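/- Let p be an odd prime with p ≡ 3 (mod 4) and a₁, a₂ odd integers with a₁a₂ ≡ 3 (mod 4) (equivalently -a₁a₂ a square mod 4). Then the Γ₀(4)-invariants of the tensor product Weil representation ℂD₁(a₁) ⊗ ℂD₁(a₂) form the two-dimensional space spanned by e⁰⊗e⁰ + e¹⊗e¹ and e⁰⊗e⁰ - e¹⊗e¹, while the Γ₀(2)-invariants and SL₂(ℤ)-invariants both equal the one-dimensional space spanned by e⁰⊗e⁰ + e¹⊗e¹. -/
import Mathlib


open Complex Matrix MatrixGroups CongruenceSubgroup ModularGroup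

noncomputable section

/-- `e(x) = exp(2πix)`. -/
def eC (x : ℂ) : ℂ := Complex.exp (2 * Real.pi * Complex.I * x)

/-- The basis vector `e^{γ₁} ⊗ e^{γ₂}` of `ℂ D₁(a₁) ⊗ ℂ D₁(a₂)`. -/
def bas {α : Type*} [DecidableEq α] (γ : α) : α → ℂ := fun x => if x = γ then 1 else 0

/-- The subspace of `Γ`-invariant vectors of a representation `ρ`. -/
def invariants {V : Type*} [AddCommGroup V] [Module ℂ V]
    (ρ : SL(2, ℤ) →* (V ≃ₗ[ℂ] V)) (Γ : Subgroup SL(2, ℤ)) : Submodule ℂ V where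
  carrier := {v | ∀ g ∈ Γ, ρ g v = v}
  add_mem' := by
    intro x y hx hy g hg
    simp [map_add, hx g hg, hy g hg]
  zero_mem' := by
    intro g hg
    simp
  smul_mem' := by
    intro c x hx g hg
    simp [_root_.map_smul, hx g hg]

/-! ### Auxiliary lemmas -/

lemma st18_eC_add (x y : ℂ) : eC (x + y) = eC x * eC y := by
  rw [eC, eC, eC, ← Complex.exp_add]; ring_nf

lemma st18_eC_int (n : ℤ) : eC (n : ℂ) = 1 := by
  rw [eC, show 2 * (Real.pi : ℂ) * Complex.I * n = n * (2 * Real.pi * Complex.I) by ring]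
  exact Complex.exp_int_mul_two_pi_mul_I n

lemma st18_eC_zero : eC 0 = 1 := by simpa using st18_eC_int 0

lemma st18_eC_half : eC (1 / 2) = -1 := by
  rw [eC, show 2 * (Real.pi : ℂ) * Complex.I * (1/2) = Real.pi * Complex.I by ring]
  exact Complex.exp_pi_mul_I

lemma st18_eC_ne_zero (x : ℂ) : eC x ≠ 0 := Complex.exp_ne_zero _

lemma st18_eC_odd_half (m : ℤ) (hm : Odd m) : eC ((m : ℂ) / 2) = -1 := by
  obtain ⟨k, hk⟩ := hm
  have : ((m : ℂ) / 2) = (k : ℂ) + 1 / 2 := by rw [hk]; push_cast; ring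
  rw [this, st18_eC_add, st18_eC_int, st18_eC_half, one_mul]

/-- Balanced remainders. -/
lemma st18_exists_near (a c : ℤ) (hc : c ≠ 0) :
    ∃ r : ℤ, c ∣ (a - r) ∧ 2 * r.natAbs ≤ c.natAbs := by
  have hm : (0:ℤ) < |c| := abs_pos.mpr hc
  have h0 : 0 ≤ a % |c| := Int.emod_nonneg a (ne_of_gt hm)
  have h1 : a % |c| < |c| := Int.emod_lt_of_pos a hm
  have hdvd : |c| ∣ a - a % |c| := by
    have := Int.emod_add_mul_ediv a |c|
    exact ⟨a / |c|, by linarith⟩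
  by_cases h : 2 * (a % |c|) ≤ |c|
  · refine ⟨a % |c|, (abs_dvd _ _).mp hdvd, ?_⟩
    have habs : |c| = c ∨ |c| = -c := abs_choice c
    omega
  · refine ⟨a % |c| - |c|, (abs_dvd _ _).mp ?_, ?_⟩
    · have : a - (a % |c| - |c|) = (a - a % |c|) + |c| := by ring
      rw [this]; exact dvd_add hdvd dvd_rfl
    · have habs : |c| = c ∨ |c| = -c := abs_choice c
      omega

lemma st18_eq_T_zpow_of_c_zero (g : SL(2,ℤ)) (hc : g.1 1 0 = 0) :
    g = T ^ (g.1 0 1) ∨ g = -T ^ (-(g.1 0 1)) := by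
  have hdet : g.1.det = 1 := g.2
  rw [Matrix.det_fin_two, hc, mul_zero, sub_zero] at hdet
  rcases Int.eq_one_or_neg_one_of_mul_eq_one' hdet with ⟨ha, hd⟩ | ⟨ha, hd⟩
  · left
    apply Subtype.ext
    rw [coe_T_zpow]
    ext i j
    fin_cases i <;> fin_cases j <;> simp [ha, hd, hc]
  · right
    apply Subtype.ext
    show g.1 = (-(T ^ (-(g.1 0 1)))).1
    rw [Matrix.SpecialLinearGroup.coe_neg, coe_T_zpow]
    ext i j
    fin_cases i <;> fin_cases j <;> simp [ha, hd, hc]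

lemma st18_neg_one_eq_S_sq : (-1 : SL(2,ℤ)) = ModularGroup.S * ModularGroup.S := by
  apply Subtype.ext
  show (-(1:SL(2,ℤ))).1 = (ModularGroup.S * ModularGroup.S).1
  rw [Matrix.SpecialLinearGroup.coe_neg, Matrix.SpecialLinearGroup.coe_mul, coe_S]
  ext i j
  fin_cases i <;> fin_cases j <;> simp [Matrix.mul_apply, Fin.sum_univ_two]

lemma st18_entry00_T_zpow_mul (n : ℤ) (g : SL(2,ℤ)) :
    (T ^ n * g).1 0 0 = g.1 0 0 + n * g.1 1 0 := by
  rw [Matrix.SpecialLinearGroup.coe_mul, coe_T_zpow]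
  simp [Matrix.mul_apply, Fin.sum_univ_two]

lemma st18_entry10_S_mul (g : SL(2,ℤ)) : (ModularGroup.S * g).1 1 0 = g.1 0 0 := by
  rw [Matrix.SpecialLinearGroup.coe_mul, coe_S]
  simp [Matrix.mul_apply, Fin.sum_univ_two]

lemma st18_coe_S_T_zpow_S_inv (k : ℤ) :
    (ModularGroup.S * T ^ k * ModularGroup.S⁻¹).1 = !![1, 0; -k, 1] := by
  rw [Matrix.SpecialLinearGroup.coe_mul, Matrix.SpecialLinearGroup.coe_mul,
    Matrix.SpecialLinearGroup.coe_inv, coe_S, coe_T_zpow, Matrix.adjugate_fin_two]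
  ext i j
  fin_cases i <;> fin_cases j <;> simp [Matrix.mul_apply, Fin.sum_univ_two]

lemma st18_entry10_lower_mul (x : ℤ) (X h : SL(2,ℤ)) (hX : X.1 = !![1, 0; x, 1]) :
    (X * h).1 1 0 = x * h.1 0 0 + h.1 1 0 := by
  rw [Matrix.SpecialLinearGroup.coe_mul, hX]
  simp [Matrix.mul_apply, Fin.sum_univ_two]

/-- `SL(2,ℤ)` is generated by `S` and `T`. -/
lemma st18_genSL (g : SL(2,ℤ)) : g ∈ Subgroup.closure {ModularGroup.S, ModularGroup.T} := by
  have hS : ModularGroup.S ∈ Subgroup.closure {ModularGroup.S, ModularGroup.T} :=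
    Subgroup.subset_closure (by simp)
  have hT : ModularGroup.T ∈ Subgroup.closure {ModularGroup.S, ModularGroup.T} :=
    Subgroup.subset_closure (by simp)
  have base : ∀ g : SL(2,ℤ), g.1 1 0 = 0 →
      g ∈ Subgroup.closure {ModularGroup.S, ModularGroup.T} := by
    intro g hc
    rcases st18_eq_T_zpow_of_c_zero g hc with h | h
    · rw [h]; exact Subgroup.zpow_mem _ hT _
    · rw [h, (neg_one_mul (T ^ (-g.1 0 1))).symm, st18_neg_one_eq_S_sq]
      exact Subgroup.mul_mem _ (Subgroup.mul_mem _ hS hS) (Subgroup.zpow_mem _ hT _)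
  suffices H : ∀ n : ℕ, ∀ g : SL(2,ℤ), (g.1 1 0).natAbs ≤ n →
      g ∈ Subgroup.closure {ModularGroup.S, ModularGroup.T} by
    exact H (g.1 1 0).natAbs g le_rfl
  intro n
  induction n with
  | zero => intro g hg; exact base g (by omega)
  | succ n ih =>
    intro g hg
    by_cases hc : g.1 1 0 = 0
    · exact base g hc
    · obtain ⟨r, hdvd, hrb⟩ := st18_exists_near (g.1 0 0) (g.1 1 0) hc
      obtain ⟨k, hk⟩ := hdvd
      set g' := ModularGroup.S * (T ^ (-k) * g) with hg'
      have h00 : (T ^ (-k) * g).1 0 0 = r := by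
        rw [st18_entry00_T_zpow_mul]; linarith [hk]
      have h10 : g'.1 1 0 = r := by rw [hg', st18_entry10_S_mul, h00]
      have hlt : (g'.1 1 0).natAbs ≤ n := by rw [h10]; omega
      have hmem := ih g' hlt
      have : g = T ^ k * (ModularGroup.S⁻¹ * g') := by rw [hg']; group
      rw [this]
      exact Subgroup.mul_mem _ (Subgroup.zpow_mem _ hT _)
        (Subgroup.mul_mem _ (Subgroup.inv_mem _ hS) hmem)

/-- `Γ₀(N)` for `N = 2, 4` is generated by `T`, `S T^{-N} S⁻¹` and `-1`. -/
lemma st18_genGamma (N : ℕ) (hN : N = 2 ∨ N = 4) :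
    ∀ g : SL(2,ℤ), (N:ℤ) ∣ g.1 1 0 →
    g ∈ Subgroup.closure
      {ModularGroup.T, ModularGroup.S * T ^ (-(N:ℤ)) * ModularGroup.S⁻¹, (-1 : SL(2,ℤ))} := by
  set M : Set SL(2,ℤ) :=
    {ModularGroup.T, ModularGroup.S * T ^ (-(N:ℤ)) * ModularGroup.S⁻¹, (-1 : SL(2,ℤ))} with hM
  have hT : ModularGroup.T ∈ Subgroup.closure M := Subgroup.subset_closure (by simp [hM])
  have hW : ModularGroup.S * T ^ (-(N:ℤ)) * ModularGroup.S⁻¹ ∈ Subgroup.closure M :=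
    Subgroup.subset_closure (by simp [hM])
  have hneg : (-1 : SL(2,ℤ)) ∈ Subgroup.closure M := Subgroup.subset_closure (by simp [hM])
  have base : ∀ g : SL(2,ℤ), g.1 1 0 = 0 → g ∈ Subgroup.closure M := by
    intro g hc
    rcases st18_eq_T_zpow_of_c_zero g hc with h | h
    · rw [h]; exact Subgroup.zpow_mem _ hT _
    · rw [h, (neg_one_mul (T ^ (-g.1 0 1))).symm]
      exact Subgroup.mul_mem _ hneg (Subgroup.zpow_mem _ hT _)
  suffices H : ∀ n : ℕ, ∀ g : SL(2,ℤ), (g.1 1 0).natAbs ≤ n → (N:ℤ) ∣ g.1 1 0 →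
      g ∈ Subgroup.closure M by
    intro g hg; exact H (g.1 1 0).natAbs g le_rfl hg
  intro n
  induction n with
  | zero => intro g hg _; exact base g (by omega)
  | succ n ih =>
    intro g hg hgd
    by_cases hc : g.1 1 0 = 0
    · exact base g hc
    · have hdet : g.1.det = 1 := g.2
      rw [Matrix.det_fin_two] at hdet
      have hceven : Even (g.1 1 0) := by
        obtain ⟨t, ht⟩ := hgd
        exact ⟨(N/2) * t, by rcases hN with h | h <;> subst h <;> push_cast at ht ⊢ <;> omega⟩
      have hadodd : Odd (g.1 0 0 * g.1 1 1) := by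
        have hbc : Even (g.1 0 1 * g.1 1 0) := Int.even_mul.mpr (Or.inr hceven)
        have : g.1 0 0 * g.1 1 1 = g.1 0 1 * g.1 1 0 + 1 := by linarith
        rw [this]; exact hbc.add_one
      have haodd : Odd (g.1 0 0) := (Int.odd_mul.mp hadodd).1
      obtain ⟨r, hdvd, hrb⟩ := st18_exists_near (g.1 0 0) (g.1 1 0) hc
      obtain ⟨k, hk⟩ := hdvd
      have hrodd : Odd r := by
        have : r = g.1 0 0 - g.1 1 0 * k := by linarith
        rw [this]; exact haodd.sub_even (Int.even_mul.mpr (Or.inl hceven))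
      have hrne : r ≠ 0 := by rintro rfl; simp at hrodd
      have hNr : ((N:ℤ) * r) ≠ 0 :=
        mul_ne_zero (by rcases hN with h | h <;> subst h <;> norm_num) hrne
      obtain ⟨r', hdvd', hrb'⟩ := st18_exists_near (g.1 1 0) ((N:ℤ) * r) hNr
      obtain ⟨m, hm⟩ := hdvd'
      set W : SL(2,ℤ) := ModularGroup.S * T ^ (-(N:ℤ)) * ModularGroup.S⁻¹ with hWdef
      have hWm : ∀ j : ℤ, (W ^ j).1 = !![1, 0; (N:ℤ) * j, 1] := by
        intro j
        have : W ^ j = ModularGroup.S * T ^ ((-(N:ℤ)) * j) * ModularGroup.S⁻¹ := by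
          rw [hWdef, conj_zpow, ← _root_.zpow_mul]
        rw [this, st18_coe_S_T_zpow_S_inv]; ring_nf
      set h1 : SL(2,ℤ) := T ^ (-k) * g with hh1
      have h100 : h1.1 0 0 = r := by rw [hh1, st18_entry00_T_zpow_mul]; linarith
      have h110 : h1.1 1 0 = g.1 1 0 := by
        rw [hh1]; exact congrFun (T_pow_mul_apply_one (-k) g) 0
      set g' : SL(2,ℤ) := W ^ (-m) * h1 with hg'
      have hg'10 : g'.1 1 0 = r' := by
        rw [hg', st18_entry10_lower_mul ((N:ℤ) * (-m)) _ _ (hWm (-m)), h100, h110]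
        linarith
      have hr'dvd : (N:ℤ) ∣ r' := by
        have h2 : (N:ℤ) ∣ g.1 1 0 - r' := dvd_trans ⟨r, by ring⟩ ⟨m, hm⟩
        simpa using dvd_sub hgd h2
      have hlt : (g'.1 1 0).natAbs ≤ n := by
        rw [hg'10]
        have hb2 : 2 * r'.natAbs ≤ N * r.natAbs := by
          have := hrb'
          rwa [Int.natAbs_mul, Int.natAbs_natCast] at this
        have hro : r.natAbs % 2 = 1 := Nat.odd_iff.mp (Int.natAbs_odd.mpr hrodd)
        have hcN : N ∣ (g.1 1 0).natAbs := Int.natAbs_dvd_natAbs.mpr (by simpa using hgd)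
        have hrN : N ∣ r'.natAbs := Int.natAbs_dvd_natAbs.mpr (by simpa using hr'dvd)
        have hc0 : (g.1 1 0).natAbs ≠ 0 := by simpa using hc
        rcases hN with h | h <;> subst h <;> omega
      have hmem : g' ∈ Subgroup.closure M := ih g' hlt (by rw [hg'10]; exact hr'dvd)
      have : g = T ^ k * (W ^ m * g') := by rw [hg', hh1]; group
      rw [this]
      exact Subgroup.mul_mem _ (Subgroup.zpow_mem _ hT _)
        (Subgroup.mul_mem _ (Subgroup.zpow_mem _ hW _) hmem)

/-- The stabilizer in `SL(2,ℤ)` of a vector, as a subgroup. -/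
def st18_fixSub {V : Type*} [AddCommGroup V] [Module ℂ V]
    (ρ : SL(2, ℤ) →* (V ≃ₗ[ℂ] V)) (v : V) : Subgroup SL(2,ℤ) where
  carrier := {g | ρ g v = v}
  one_mem' := by simp
  mul_mem' := by
    intro a b ha hb
    show ρ (a * b) v = v
    rw [_root_.map_mul]
    show ρ a (ρ b v) = v
    rw [show ρ b v = v from hb, show ρ a v = v from ha]
  inv_mem' := by
    intro a ha
    show ρ a⁻¹ v = v
    rw [_root_.map_inv]
    show (ρ a).symm v = v
    rw [LinearEquiv.symm_apply_eq]
    exact (show ρ a v = v from ha).symm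

lemma st18_mem_fixSub {V : Type*} [AddCommGroup V] [Module ℂ V]
    (ρ : SL(2, ℤ) →* (V ≃ₗ[ℂ] V)) (v : V) (g : SL(2,ℤ)) :
    g ∈ st18_fixSub ρ v ↔ ρ g v = v := Iff.rfl

set_option maxHeartbeats 2000000 in
/-- let `p` be a prime with `p ≡ 3 (mod 4)` and `a₁, a₂` odd integers with
`a₁ a₂ ≡ 3 (mod 4)`.  For the tensor product Weil representation on
`ℂ D₁(a₁) ⊗ ℂ D₁(a₂)` (here `D₁(a) = (ℤ/2ℤ, γ ↦ aγ²/4)`), the `Γ₀(4)`-invariants form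
the two-dimensional space spanned by `e⁰⊗e⁰ + e¹⊗e¹` and `e⁰⊗e⁰ - e¹⊗e¹`, while the
`Γ₀(2)`- and `SL₂(ℤ)`-invariants both equal the line spanned by `e⁰⊗e⁰ + e¹⊗e¹`. -/
theorem stmt18 (p : ℕ) [hp : Fact p.Prime] (hp3 : p % 4 = 3)
    (a₁ a₂ : ℤ) (ha₁ : Odd a₁) (ha₂ : Odd a₂) (ha : (a₁ * a₂) % 4 = 3)
    (ρ : SL(2, ℤ) →* ((ZMod 2 × ZMod 2 → ℂ) ≃ₗ[ℂ] (ZMod 2 × ZMod 2 → ℂ)))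
    (hT : ∀ γ : ZMod 2 × ZMod 2, ρ ModularGroup.T (bas γ) =
      eC (((a₁ : ℂ) * (γ.1.val : ℂ) ^ 2 + (a₂ : ℂ) * (γ.2.val : ℂ) ^ 2) / 4) • bas γ)
    (hS : ∀ γ : ZMod 2 × ZMod 2, ρ ModularGroup.S (bas γ) =
      ((starRingEnd ℂ) ((1 + eC ((a₁ : ℂ) / 4)) * (1 + eC ((a₂ : ℂ) / 4))) / 4) •
        ∑ β : ZMod 2 × ZMod 2,
          eC (-((a₁ : ℂ) * (γ.1.val : ℂ) * (β.1.val : ℂ) +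
              (a₂ : ℂ) * (γ.2.val : ℂ) * (β.2.val : ℂ)) / 2) • bas β) :
    (invariants ρ (Gamma0 4) =
        Submodule.span ℂ
          {bas ((0 : ZMod 2), (0 : ZMod 2)) + bas ((1 : ZMod 2), (1 : ZMod 2)),
           bas ((0 : ZMod 2), (0 : ZMod 2)) - bas ((1 : ZMod 2), (1 : ZMod 2))} ∧
      Module.finrank ℂ (invariants ρ (Gamma0 4)) = 2) ∧
    (invariants ρ (Gamma0 2) =
        Submodule.span ℂ
          {bas ((0 : ZMod 2), (0 : ZMod 2)) + bas ((1 : ZMod 2), (1 : ZMod 2))} ∧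
      Module.finrank ℂ (invariants ρ (Gamma0 2)) = 1) ∧
    invariants ρ ⊤ =
      Submodule.span ℂ
        {bas ((0 : ZMod 2), (0 : ZMod 2)) + bas ((1 : ZMod 2), (1 : ZMod 2))} := by
  classical
  set b00 : ZMod 2 × ZMod 2 → ℂ := bas ((0 : ZMod 2), (0 : ZMod 2)) with hb00
  set b01 : ZMod 2 × ZMod 2 → ℂ := bas ((0 : ZMod 2), (1 : ZMod 2)) with hb01
  set b10 : ZMod 2 × ZMod 2 → ℂ := bas ((1 : ZMod 2), (0 : ZMod 2)) with hb10
  set b11 : ZMod 2 × ZMod 2 → ℂ := bas ((1 : ZMod 2), (1 : ZMod 2)) with hb11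
  -- arithmetic: a₁ + a₂ ≡ 0 (mod 4)
  obtain ⟨k, hk⟩ : (4:ℤ) ∣ a₁ + a₂ := by
    have h1 : a₁ % 2 = 1 := Int.odd_iff.mp ha₁
    have h2 : a₂ % 2 = 1 := Int.odd_iff.mp ha₂
    have hmul : (a₁ % 4) * (a₂ % 4) % 4 = 3 := by rw [← Int.mul_emod]; exact ha
    have e1 : a₁ % 4 = 1 ∨ a₁ % 4 = 3 := by omega
    have e2 : a₂ % 4 = 1 ∨ a₂ % 4 = 3 := by omega
    rcases e1 with h3 | h3 <;> rcases e2 with h4 | h4 <;>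
      rw [h3, h4] at hmul <;> norm_num at hmul <;> omega
  have hkc : (a₁ : ℂ) + a₂ = 4 * (k : ℂ) := by exact_mod_cast congrArg (Int.cast : ℤ → ℂ) hk
  -- eC facts
  have hu2 : eC ((a₁:ℂ) / 4) * eC ((a₁:ℂ) / 4) = -1 := by
    rw [← st18_eC_add, show ((a₁:ℂ)/4 + (a₁:ℂ)/4) = (a₁:ℂ)/2 by ring]
    exact st18_eC_odd_half a₁ ha₁
  have hw2 : eC ((a₂:ℂ) / 4) * eC ((a₂:ℂ) / 4) = -1 := by
    rw [← st18_eC_add, show ((a₂:ℂ)/4 + (a₂:ℂ)/4) = (a₂:ℂ)/2 by ring]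
    exact st18_eC_odd_half a₂ ha₂
  have hsum4 : eC (((a₁:ℂ) + (a₂:ℂ)) / 4) = 1 := by
    rw [show (((a₁:ℂ) + (a₂:ℂ))/4) = ((k:ℤ):ℂ) by rw [hkc]; push_cast; ring]
    exact st18_eC_int k
  have huw : eC ((a₁:ℂ) / 4) * eC ((a₂:ℂ) / 4) = 1 := by
    rw [← st18_eC_add, show ((a₁:ℂ)/4 + (a₂:ℂ)/4) = ((a₁:ℂ) + (a₂:ℂ))/4 by ring]
    exact hsum4
  have hwu : eC ((a₂:ℂ) / 4) = -eC ((a₁:ℂ) / 4) := by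
    apply mul_left_cancel₀ (st18_eC_ne_zero ((a₁:ℂ)/4))
    rw [huw]; linear_combination hu2
  have hune : eC ((a₁:ℂ) / 4) ≠ 1 := by
    intro h; rw [h] at hu2; norm_num at hu2
  have hwne : eC ((a₂:ℂ) / 4) ≠ 1 := by
    intro h; rw [h] at hw2; norm_num at hw2
  have hhalf1 : eC (-(a₁:ℂ) / 2) = -1 := by
    have h := st18_eC_odd_half (-a₁) ha₁.neg
    push_cast at h
    exact h
  have hhalf2 : eC (-(a₂:ℂ) / 2) = -1 := by
    have h := st18_eC_odd_half (-a₂) ha₂.neg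
    push_cast at h
    exact h
  have hsumhalf : eC ((-(a₂:ℂ) + -(a₁:ℂ)) / 2) = 1 := by
    rw [show ((-(a₂:ℂ) + -(a₁:ℂ))/2) = ((-2*k:ℤ):ℂ) by
      push_cast; linear_combination (-1/2 : ℂ) * hkc]
    exact st18_eC_int _
  have hC : (starRingEnd ℂ) ((1 + eC ((a₁ : ℂ) / 4)) * (1 + eC ((a₂ : ℂ) / 4))) / 4
      = (1/2 : ℂ) := by
    have h2 : (1 + eC ((a₁ : ℂ) / 4)) * (1 + eC ((a₂ : ℂ) / 4)) = 2 := by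
      rw [hwu]; linear_combination -hu2
    rw [h2, map_ofNat]; norm_num
  -- specializations of hT
  have hT00 : ρ ModularGroup.T b00 = b00 := by
    have h := hT ((0 : ZMod 2), (0 : ZMod 2))
    norm_num [ZMod.val_one, st18_eC_zero] at h
    exact h
  have hT11 : ρ ModularGroup.T b11 = b11 := by
    have h := hT ((1 : ZMod 2), (1 : ZMod 2))
    norm_num [ZMod.val_one, hsum4] at h
    exact h
  have hT10 : ρ ModularGroup.T b10 = eC ((a₁:ℂ)/4) • b10 := by
    have h := hT ((1 : ZMod 2), (0 : ZMod 2))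
    norm_num [ZMod.val_one] at h
    exact h
  have hT01 : ρ ModularGroup.T b01 = eC ((a₂:ℂ)/4) • b01 := by
    have h := hT ((0 : ZMod 2), (1 : ZMod 2))
    norm_num [ZMod.val_one] at h
    exact h
  have huniv : (Finset.univ : Finset (ZMod 2 × ZMod 2)) =
      {((0:ZMod 2),(0:ZMod 2)), ((0:ZMod 2),(1:ZMod 2)),
       ((1:ZMod 2),(0:ZMod 2)), ((1:ZMod 2),(1:ZMod 2))} := by decide
  -- specializations of hS
  have hS00 : ρ ModularGroup.S b00 = (1/2 : ℂ) • (b00 + b01 + b10 + b11) := by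
    have h := hS ((0 : ZMod 2), (0 : ZMod 2))
    rw [huniv, Finset.sum_insert (by decide), Finset.sum_insert (by decide),
      Finset.sum_insert (by decide), Finset.sum_singleton, hC] at h
    norm_num [ZMod.val_one, st18_eC_zero] at h
    exact h.trans (by module)
  have hS11 : ρ ModularGroup.S b11 = (1/2 : ℂ) • (b00 - b01 - b10 + b11) := by
    have h := hS ((1 : ZMod 2), (1 : ZMod 2))
    rw [huniv, Finset.sum_insert (by decide), Finset.sum_insert (by decide),
      Finset.sum_insert (by decide), Finset.sum_singleton, hC] at h
    norm_num [ZMod.val_one, st18_eC_zero, hhalf1, hhalf2, hsumhalf] at h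
    exact h.trans (by module)
  have hS01 : ρ ModularGroup.S b01 = (1/2 : ℂ) • (b00 - b01 + b10 - b11) := by
    have h := hS ((0 : ZMod 2), (1 : ZMod 2))
    rw [huniv, Finset.sum_insert (by decide), Finset.sum_insert (by decide),
      Finset.sum_insert (by decide), Finset.sum_singleton, hC] at h
    norm_num [ZMod.val_one, st18_eC_zero, hhalf1, hhalf2, hsumhalf] at h
    exact h.trans (by module)
  have hS10 : ρ ModularGroup.S b10 = (1/2 : ℂ) • (b00 + b01 - b10 - b11) := by
    have h := hS ((1 : ZMod 2), (0 : ZMod 2))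
    rw [huniv, Finset.sum_insert (by decide), Finset.sum_insert (by decide),
      Finset.sum_insert (by decide), Finset.sum_singleton, hC] at h
    norm_num [ZMod.val_one, st18_eC_zero, hhalf1, hhalf2, hsumhalf] at h
    exact h.trans (by module)
  -- action on distinguished vectors
  have hSe1 : ρ ModularGroup.S (b00 + b11) = b00 + b11 := by
    rw [_root_.map_add, hS00, hS11]; module
  have hSf1 : ρ ModularGroup.S (b01 + b10) = b00 - b11 := by
    rw [_root_.map_add, hS01, hS10]; module
  have hSe2 : ρ ModularGroup.S (b00 - b11) = b01 + b10 := by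
    rw [_root_.map_sub, hS00, hS11]; module
  have hTe1 : ρ ModularGroup.T (b00 + b11) = b00 + b11 := by rw [_root_.map_add, hT00, hT11]
  have hTe2 : ρ ModularGroup.T (b00 - b11) = b00 - b11 := by rw [_root_.map_sub, hT00, hT11]
  have hT2f1 : ρ ModularGroup.T (ρ ModularGroup.T (b01 + b10)) = -(b01 + b10) := by
    rw [_root_.map_add, hT01, hT10, _root_.map_add, _root_.map_smul, _root_.map_smul, hT01, hT10, smul_smul, smul_smul,
      hu2, hw2]
    module
  -- e1 is fixed by the whole group
  have hall : ∀ g : SL(2,ℤ), ρ g (b00 + b11) = b00 + b11 := by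
    intro g
    have hle : Subgroup.closure {ModularGroup.S, ModularGroup.T}
        ≤ st18_fixSub ρ (b00 + b11) := by
      rw [Subgroup.closure_le]
      rintro x hx
      rcases hx with rfl | rfl
      · exact hSe1
      · exact hTe1
    exact hle (st18_genSL g)
  -- inverse fact
  have hSi : ∀ x y : ZMod 2 × ZMod 2 → ℂ, ρ ModularGroup.S y = x →
      ρ ModularGroup.S⁻¹ x = y := by
    intro x y h
    rw [_root_.map_inv]
    show (ρ ModularGroup.S).symm x = y
    rw [LinearEquiv.symm_apply_eq]
    exact h.symm
  -- zpow facts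
  have hzpow2 : ((ρ ModularGroup.T) ^ (-((2:ℕ):ℤ))) (b01 + b10) = -(b01 + b10) := by
    rw [_root_.zpow_neg]
    show ((ρ ModularGroup.T) ^ (((2:ℕ):ℤ))).symm (b01 + b10) = -(b01 + b10)
    rw [LinearEquiv.symm_apply_eq, zpow_natCast]
    show b01 + b10 = (ρ ModularGroup.T) ((ρ ModularGroup.T) (-(b01 + b10)))
    rw [_root_.map_neg, _root_.map_neg, hT2f1, neg_neg]
  have hzpow4 : ((ρ ModularGroup.T) ^ (-((4:ℕ):ℤ))) (b01 + b10) = b01 + b10 := by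
    rw [_root_.zpow_neg]
    show ((ρ ModularGroup.T) ^ (((4:ℕ):ℤ))).symm (b01 + b10) = b01 + b10
    rw [LinearEquiv.symm_apply_eq, zpow_natCast]
    show b01 + b10 = (ρ ModularGroup.T) ((ρ ModularGroup.T) ((ρ ModularGroup.T) ((ρ ModularGroup.T)
      (b01 + b10))))
    rw [hT2f1, _root_.map_neg, _root_.map_neg, hT2f1, neg_neg]
  have happly : ∀ (A B : SL(2,ℤ)) (v : ZMod 2 × ZMod 2 → ℂ), ρ (A * B) v = ρ A (ρ B v) := by
    intro A B v; rw [_root_.map_mul]; rfl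
  have hW2e2 : ρ (ModularGroup.S * T ^ (-((2:ℕ):ℤ)) * ModularGroup.S⁻¹) (b00 - b11)
      = -(b00 - b11) := by
    rw [happly, happly, hSi (b00 - b11) (b01 + b10) hSf1, _root_.map_zpow, hzpow2, _root_.map_neg, hSf1]
  have hW4e2 : ρ (ModularGroup.S * T ^ (-((4:ℕ):ℤ)) * ModularGroup.S⁻¹) (b00 - b11)
      = b00 - b11 := by
    rw [happly, happly, hSi (b00 - b11) (b01 + b10) hSf1, _root_.map_zpow, hzpow4, hSf1]
  have hnege2 : ρ (-1 : SL(2,ℤ)) (b00 - b11) = b00 - b11 := by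
    rw [st18_neg_one_eq_S_sq, happly, hSe2, hSf1]
  -- expansion of arbitrary vectors
  have hexpand : ∀ v : ZMod 2 × ZMod 2 → ℂ,
      v = v (0,0) • b00 + v (0,1) • b01 + v (1,0) • b10 + v (1,1) • b11 := by
    intro v
    funext x
    have hx : x = ((0:ZMod 2),(0:ZMod 2)) ∨ x = ((0:ZMod 2),(1:ZMod 2))
        ∨ x = ((1:ZMod 2),(0:ZMod 2)) ∨ x = ((1:ZMod 2),(1:ZMod 2)) := by
      revert x; decide
    rcases hx with rfl | rfl | rfl | rfl <;>
      simp [hb00, hb01, hb10, hb11, bas, Prod.ext_iff,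
        (by decide : (0:ZMod 2) ≠ 1), (by decide : (1:ZMod 2) ≠ 0)]
  have hTv : ∀ v : ZMod 2 × ZMod 2 → ℂ, ρ ModularGroup.T v =
      v (0,0) • b00 + (eC ((a₂:ℂ)/4) * v (0,1)) • b01
        + (eC ((a₁:ℂ)/4) * v (1,0)) • b10 + v (1,1) • b11 := by
    intro v
    conv_lhs => rw [hexpand v]
    rw [_root_.map_add, _root_.map_add, _root_.map_add, _root_.map_smul, _root_.map_smul, _root_.map_smul, _root_.map_smul,
      hT00, hT01, hT10, hT11]
    module
  -- invariance under T kills the off-diagonal components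
  have hvanish : ∀ v : ZMod 2 × ZMod 2 → ℂ, ρ ModularGroup.T v = v →
      v (1,0) = 0 ∧ v (0,1) = 0 := by
    intro v hv
    have h := hTv v
    rw [hv] at h
    constructor
    · have h10 := congrFun h ((1:ZMod 2),(0:ZMod 2))
      simp [hb00, hb01, hb10, hb11, bas, Prod.ext_iff,
        (by decide : (0:ZMod 2) ≠ 1), (by decide : (1:ZMod 2) ≠ 0)] at h10
      have hz : (eC ((a₁:ℂ)/4) - 1) * v (1,0) = 0 := by linear_combination -h10
      rcases mul_eq_zero.mp hz with hc | hc
      · exact absurd (by linear_combination hc) hune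
      · exact hc
    · have h01 := congrFun h ((0:ZMod 2),(1:ZMod 2))
      simp [hb00, hb01, hb10, hb11, bas, Prod.ext_iff,
        (by decide : (0:ZMod 2) ≠ 1), (by decide : (1:ZMod 2) ≠ 0)] at h01
      have hz : (eC ((a₂:ℂ)/4) - 1) * v (0,1) = 0 := by linear_combination -h01
      rcases mul_eq_zero.mp hz with hc | hc
      · exact absurd (by linear_combination hc) hwne
      · exact hc
  have hdec : ∀ v : ZMod 2 × ZMod 2 → ℂ, v (1,0) = 0 → v (0,1) = 0 →
      v = ((v (0,0) + v (1,1))/2) • (b00 + b11) + ((v (0,0) - v (1,1))/2) • (b00 - b11) := by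
    intro v h1 h2
    have he := hexpand v
    rw [h1, h2, zero_smul, zero_smul, add_zero, add_zero] at he
    conv_lhs => rw [he]
    module
  -- group membership facts
  have hT4mem : ModularGroup.T ∈ Gamma0 4 := by
    rw [CongruenceSubgroup.Gamma0_mem]
    simp [coe_T]
  have hT2mem : ModularGroup.T ∈ Gamma0 2 := by
    rw [CongruenceSubgroup.Gamma0_mem]
    simp [coe_T]
  have hW2mem : ModularGroup.S * T ^ (-((2:ℕ):ℤ)) * ModularGroup.S⁻¹ ∈ Gamma0 2 := by
    rw [CongruenceSubgroup.Gamma0_mem]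
    have hco := st18_coe_S_T_zpow_S_inv (-((2:ℕ):ℤ))
    rw [show ((ModularGroup.S * T ^ (-((2:ℕ):ℤ)) * ModularGroup.S⁻¹ : SL(2,ℤ)) : Matrix (Fin 2) (Fin 2) ℤ) 1 0
      = (2 : ℤ) by rw [hco]; norm_num]
    decide
  have hdvd : ∀ (N : ℕ) (g : SL(2,ℤ)), g ∈ Gamma0 N → (N:ℤ) ∣ g.1 1 0 := by
    intro N g hg
    have h := CongruenceSubgroup.Gamma0_mem.mp hg
    exact (ZMod.intCast_zmod_eq_zero_iff_dvd _ N).mp h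
  -- invariance of e2 under Γ₀(4)
  have hinv4e2 : ∀ g ∈ Gamma0 4, ρ g (b00 - b11) = b00 - b11 := by
    intro g hg
    have hcl := st18_genGamma 4 (Or.inr rfl) g (hdvd 4 g hg)
    have hle : Subgroup.closure
        {ModularGroup.T, ModularGroup.S * T ^ (-((4:ℕ):ℤ)) * ModularGroup.S⁻¹,
          (-1 : SL(2,ℤ))} ≤ st18_fixSub ρ (b00 - b11) := by
      rw [Subgroup.closure_le]
      rintro x hx
      rcases hx with rfl | rfl | rfl
      · exact hTe2
      · exact hW4e2
      · exact hnege2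
    exact hle hcl
  -- part 1 : Γ₀(4)
  have h4eq : invariants ρ (Gamma0 4) =
      Submodule.span ℂ {b00 + b11, b00 - b11} := by
    apply le_antisymm
    · intro v hv
      have hvT : ρ ModularGroup.T v = v := hv ModularGroup.T hT4mem
      obtain ⟨h1, h2⟩ := hvanish v hvT
      rw [hdec v h1 h2]
      exact Submodule.add_mem _
        (Submodule.smul_mem _ _ (Submodule.subset_span (Set.mem_insert _ _)))
        (Submodule.smul_mem _ _ (Submodule.subset_span (Set.mem_insert_of_mem _ rfl)))
    · rw [Submodule.span_le]
      rintro x hx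
      rcases hx with rfl | rfl
      · exact fun g _ => hall g
      · exact fun g hg => hinv4e2 g hg
  -- linear independence / finrank
  have hrange : ({b00 + b11, b00 - b11} : Set (ZMod 2 × ZMod 2 → ℂ))
      = Set.range ![b00 + b11, b00 - b11] := by
    ext x
    simp only [Set.mem_insert_iff, Set.mem_singleton_iff, Set.mem_range, Fin.exists_fin_two,
      Matrix.cons_val_zero, Matrix.cons_val_one, Matrix.head_cons]
    tauto
  have hli : LinearIndependent ℂ ![b00 + b11, b00 - b11] := by
    rw [LinearIndependent.pair_iff]
    intro s t hst
    have h0 := congrFun hst ((0:ZMod 2),(0:ZMod 2))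
    have h1 := congrFun hst ((1:ZMod 2),(1:ZMod 2))
    simp [hb00, hb01, hb10, hb11, bas, Prod.ext_iff,
      (by decide : (0:ZMod 2) ≠ 1), (by decide : (1:ZMod 2) ≠ 0)] at h0 h1
    constructor
    · linear_combination (h0 + h1)/2
    · linear_combination (h0 - h1)/2
  have hrank4 : Module.finrank ℂ (invariants ρ (Gamma0 4)) = 2 := by
    rw [h4eq, hrange, finrank_span_eq_card hli]
    simp
  -- part 2 : Γ₀(2)
  have he1ne : b00 + b11 ≠ 0 := by
    intro h
    have h0 := congrFun h ((0:ZMod 2),(0:ZMod 2))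
    simp [hb00, hb11, bas, Prod.ext_iff, (by decide : (0:ZMod 2) ≠ 1),
      (by decide : (1:ZMod 2) ≠ 0)] at h0
  have h2eq : invariants ρ (Gamma0 2) = Submodule.span ℂ {b00 + b11} := by
    apply le_antisymm
    · intro v hv
      have hvT : ρ ModularGroup.T v = v := hv ModularGroup.T hT2mem
      obtain ⟨h1, h2⟩ := hvanish v hvT
      have hvW : ρ (ModularGroup.S * T ^ (-((2:ℕ):ℤ)) * ModularGroup.S⁻¹) v = v :=
        hv _ hW2mem
      have hveq := hdec v h1 h2
      rw [hveq] at hvW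
      rw [_root_.map_add, _root_.map_smul, _root_.map_smul, hall, hW2e2] at hvW
      have h0 := congrFun hvW ((0:ZMod 2),(0:ZMod 2))
      simp [hb00, hb11, bas, Prod.ext_iff, (by decide : (0:ZMod 2) ≠ 1),
        (by decide : (1:ZMod 2) ≠ 0)] at h0
      -- h0 gives v (1,1) = v (0,0)
      have hB : v (1,1) = v (0,0) := by
        first
        | linear_combination h0 | linear_combination -h0
        | linear_combination h0/2 | linear_combination -h0/2
        | linear_combination 2*h0 | linear_combination -2*h0
      refine Submodule.mem_span_singleton.mpr ⟨v (0,0), ?_⟩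
      conv_rhs => rw [hveq]
      rw [hB]
      module
    · rw [Submodule.span_le]
      rintro x hx
      rcases hx with rfl
      exact fun g _ => hall g
  have hrank2 : Module.finrank ℂ (invariants ρ (Gamma0 2)) = 1 := by
    rw [h2eq, finrank_span_singleton he1ne]
  -- part 3 : top
  have htopeq : invariants ρ (⊤ : Subgroup SL(2,ℤ)) = Submodule.span ℂ {b00 + b11} := by
    apply le_antisymm
    · intro v hv
      have : v ∈ invariants ρ (Gamma0 2) := fun g _ => hv g trivial
      rw [h2eq] at this
      exact this
    · rw [Submodule.span_le]
      rintro x hx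
      rcases hx with rfl
      exact fun g _ => hall g
  exact ⟨⟨h4eq, hrank4⟩, ⟨h2eq, hrank2⟩, htopeq⟩
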